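/- Let R → S be any ring homomorphism and C a cotorsion S-module. Then the underlying R-module of C is a cotorsion R-module. -/

import Mathlib

open CategoryTheory Opposite Limits

lemma subsingleton_of_isZero {A : Type} [Ring A] {M : ModuleCat A} (h : IsZero M) :
    Subsingleton M := by
  have h0 : (𝟙 M) = 0 := h.eq_of_src _ _
  refine ⟨fun x y => ?_⟩
  have hx : ∀ z : M, z = 0 := fun z => by
    calc z = (𝟙 M) z := rfl
    _ = (0 : M ⟶ M) z := by rw [h0]
    _ = 0 := rfl
  rw [hx x, hx y]

lemma ext_one_subsingleton_iff {A : Type} [CommRing A] {X : ModuleCat A} (Y : ModuleCat A)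
    (P : ProjectiveResolution X) :
    Subsingleton (((Ext A (ModuleCat A) 1).obj (op X)).obj Y) ↔
      ∀ g : (P.complex.X 1 ⟶ Y), P.complex.d 2 1 ≫ g = 0 →
        ∃ h : (P.complex.X 0 ⟶ Y), P.complex.d 1 0 ≫ h = g := by
  have e := (P.isoExt (R := A) 1 Y).toLinearEquiv.toEquiv
  rw [e.subsingleton_congr]
  have key : (P.complex.linearYonedaObj A Y).ExactAt 1 ↔
      ∀ g : (P.complex.X 1 ⟶ Y), P.complex.d 2 1 ≫ g = 0 →
        ∃ h : (P.complex.X 0 ⟶ Y), P.complex.d 1 0 ≫ h = g := by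
    rw [HomologicalComplex.exactAt_iff' _ 0 1 2 (by simp) (by simp),
      ShortComplex.moduleCat_exact_iff]
    exact Iff.rfl
  constructor
  · intro hs
    exact key.mp ((HomologicalComplex.exactAt_iff_isZero_homology _ _).mpr
      (ModuleCat.isZero_of_subsingleton _))
  · intro hext
    exact subsingleton_of_isZero
      ((HomologicalComplex.exactAt_iff_isZero_homology _ _).mp (key.mpr hext))

lemma resolution_surj {A : Type} [CommRing A] {X : ModuleCat A} (P : ProjectiveResolution X) :
    Function.Surjective (P.π.f 0 : P.complex.X 0 ⟶ X) := by
  have : Epi (P.π.f 0) := epi_of_isColimit_cofork P.isColimitCokernelCofork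
  exact (ModuleCat.epi_iff_surjective _).mp this

lemma resolution_exact0 {A : Type} [CommRing A] {X : ModuleCat A} (P : ProjectiveResolution X) :
    Function.Exact (P.complex.d 1 0) (P.π.f 0 : P.complex.X 0 ⟶ X) := by
  have h := ShortComplex.exact_of_g_is_cokernel
    (ShortComplex.mk (P.complex.d 1 0) (P.π.f 0 : P.complex.X 0 ⟶ X)
      P.complex_d_comp_π_f_zero) P.isColimitCokernelCofork
  rw [ShortComplex.moduleCat_exact_iff] at h
  intro x
  constructor
  · intro hx; exact h x hx
  · rintro ⟨y, rfl⟩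
    calc (P.π.f 0) (P.complex.d 1 0 y) = (P.complex.d 1 0 ≫ P.π.f 0) y := rfl
    _ = 0 := by rw [P.complex_d_comp_π_f_zero]; rfl

lemma extension_property {A : Type} [CommRing A] {X : Type} [AddCommGroup X] [Module A X]
    (Y : ModuleCat A)
    (hExt : Subsingleton (((Ext A (ModuleCat A) 1).obj (op (ModuleCat.of A X))).obj Y))
    {B : Type} [AddCommGroup B] [Module A B] [hB : Module.Projective A B]
    (π : B →ₗ[A] X) (hπ : Function.Surjective π) (φ : LinearMap.ker π →ₗ[A] Y) :
    ∃ Φ : B →ₗ[A] Y, ∀ k : LinearMap.ker π, Φ k = φ k := by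
  obtain ⟨Q⟩ := (HasProjectiveResolution.out (Z := ModuleCat.of A X))
  have hQ0 : Module.Projective A (Q.complex.X 0) :=
    (IsProjective.iff_projective _).mpr (Q.projective 0)
  have hExtProp := (ext_one_subsingleton_iff Y Q).mp hExt
  set πQ : Q.complex.X 0 →ₗ[A] X := (Q.π.f 0 : Q.complex.X 0 ⟶ ModuleCat.of A X).hom with hπQ
  have hsurjQ : Function.Surjective πQ := resolution_surj Q
  have hex0 : Function.Exact (Q.complex.d 1 0) πQ := resolution_exact0 Q
  obtain ⟨β, hβ⟩ := Module.projective_lifting_property π πQ hπ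
  obtain ⟨α, hα⟩ := Module.projective_lifting_property πQ π hsurjQ
  have hmem : ∀ y : Q.complex.X 1, β (Q.complex.d 1 0 y) ∈ LinearMap.ker π := by
    intro y
    have h1 : πQ (Q.complex.d 1 0 y) = 0 := hex0.apply_apply_eq_zero y
    have h2 : π (β (Q.complex.d 1 0 y)) = πQ (Q.complex.d 1 0 y) := by
      rw [← hβ]; rfl
    simpa [LinearMap.mem_ker, h2] using h1
  set g0 : Q.complex.X 1 →ₗ[A] LinearMap.ker π :=
    LinearMap.codRestrict _ ((β : Q.complex.X 0 →ₗ[A] B) ∘ₗ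
      (Q.complex.d 1 0).hom) hmem with hg0
  set g : (Q.complex.X 1 ⟶ Y) := ModuleCat.ofHom (φ ∘ₗ g0 : Q.complex.X 1 →ₗ[A] Y) with hgdef
  have hg : Q.complex.d 2 1 ≫ g = 0 := by
    apply ModuleCat.hom_ext; apply LinearMap.ext
    intro x
    have hd : Q.complex.d 1 0 (Q.complex.d 2 1 x) = 0 := by
      calc Q.complex.d 1 0 (Q.complex.d 2 1 x) = (Q.complex.d 2 1 ≫ Q.complex.d 1 0) x := rfl
      _ = 0 := by rw [HomologicalComplex.d_comp_d]; rfl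
    show φ (g0 (Q.complex.d 2 1 x)) = 0
    have : g0 (Q.complex.d 2 1 x) = 0 := by
      apply Subtype.ext
      show β (Q.complex.d 1 0 (Q.complex.d 2 1 x)) = 0
      rw [hd, map_zero]
    rw [this, map_zero]
  obtain ⟨h, hh⟩ := hExtProp g hg
  have hker : ∀ n : Q.complex.X 0, (hn : πQ n = 0) →
      h n = φ ⟨β n, by rw [LinearMap.mem_ker, ← LinearMap.comp_apply, hβ]; exact hn⟩ := by
    intro n hn
    obtain ⟨y, hy⟩ := (hex0 n).mp hn
    subst hy
    calc h (Q.complex.d 1 0 y) = (Q.complex.d 1 0 ≫ h) y := rfl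
    _ = g y := by rw [hh]
    _ = φ (g0 y) := rfl
    _ = _ := by congr 1
  have hθmem : ∀ b : B, β (α b) - b ∈ LinearMap.ker π := by
    intro b
    rw [LinearMap.mem_ker, map_sub, ← LinearMap.comp_apply, hβ, ← hα]
    simp
  set θ : B →ₗ[A] LinearMap.ker π :=
    LinearMap.codRestrict _ ((β ∘ₗ α) - LinearMap.id) hθmem with hθ
  refine ⟨(h.hom ∘ₗ α) - φ ∘ₗ θ, ?_⟩
  intro k
  have hαk : πQ (α k) = 0 := by
    rw [← LinearMap.comp_apply, hα]
    exact k.2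
  simp only [LinearMap.sub_apply, LinearMap.comp_apply]
  rw [hker (α k) hαk, ← map_sub]
  congr 1
  apply Subtype.ext
  have : ((θ (k : B) : B)) = β (α (k : B)) - (k : B) := rfl
  show β (α (k : B)) - ((θ (k : B) : B)) = (k : B)
  rw [this]
  abel

/-- A module `C` over a ring `A` is cotorsion if `Ext¹_A(F, C) = 0` for every flat
`A`-module `F`. -/
def Cotorsion (A : Type) [CommRing A] (C : Type) [AddCommGroup C] [Module A C] : Prop :=
  ∀ (F : Type) [AddCommGroup F] [Module A F], Module.Flat A F →
    Subsingleton (((Ext A (ModuleCat A) 1).obj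
      (op (ModuleCat.of A F))).obj (ModuleCat.of A C))

/-- For any ring homomorphism `R → S` and any cotorsion `S`-module `C`,
the underlying `R`-module of `C` (restriction of scalars) is a cotorsion `R`-module. -/
theorem cotorsion_restriction_of_scalars (R S : Type) [CommRing R] [CommRing S]
    (f : R →+* S) (C : Type) [AddCommGroup C] [Module S C] (hC : Cotorsion S C) :
    Cotorsion R ((ModuleCat.restrictScalars f).obj (ModuleCat.of S C)) := by
  intro F _ _ hF
  haveI : Module.Flat R F := hF
  letI : Algebra R S := f.toAlgebra
  set Y : ModuleCat R := ModuleCat.of R ↑((ModuleCat.restrictScalars f).obj (ModuleCat.of S C)) with hY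
  letI instSY : Module S Y := inferInstanceAs (Module S C)
  haveI instTower : IsScalarTower R S Y := by
    constructor
    intro r s c
    show (f r * s) • c = f r • s • c
    rw [mul_smul]
  obtain ⟨P⟩ := (HasProjectiveResolution.out (Z := ModuleCat.of R F))
  rw [ext_one_subsingleton_iff Y P]
  intro g hg
  -- the augmentation
  set π₀ : P.complex.X 0 →ₗ[R] F := (P.π.f 0 : P.complex.X 0 ⟶ ModuleCat.of R F).hom with hπ₀
  have hsurj0 : Function.Surjective π₀ := resolution_surj P
  have hex0 : Function.Exact (P.complex.d 1 0).hom π₀ :=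
    resolution_exact0 P
  -- exactness at degree 1
  have hex1 : Function.Exact (P.complex.d 2 1).hom
      (P.complex.d 1 0).hom := by
    have h := P.exact_succ 0
    rw [ShortComplex.moduleCat_exact_iff] at h
    intro x
    constructor
    · intro hx; exact h x hx
    · rintro ⟨y, rfl⟩
      calc (P.complex.d 1 0) ((P.complex.d 2 1) y) = (P.complex.d 2 1 ≫ P.complex.d 1 0) y := rfl
      _ = 0 := by rw [HomologicalComplex.d_comp_d]; rfl
  -- g kills ker d₁
  have hker_le : LinearMap.ker (P.complex.d 1 0).hom ≤
      LinearMap.ker g.hom := by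
    intro x hx
    rw [LinearMap.mem_ker] at hx ⊢
    obtain ⟨y, rfl⟩ := (hex1 x).mp hx
    calc g ((P.complex.d 2 1) y) = (P.complex.d 2 1 ≫ g) y := rfl
    _ = 0 := by rw [hg]; rfl
  -- the map on the kernel K = ker π₀
  have hrange : LinearMap.ker π₀ =
      LinearMap.range (P.complex.d 1 0).hom :=
    LinearMap.exact_iff.mp hex0
  set e₁ := (P.complex.d 1 0).hom.quotKerEquivRange with he₁
  set gbar : LinearMap.ker π₀ →ₗ[R] Y :=
    (Submodule.liftQ _ g.hom hker_le) ∘ₗ (e₁.symm.toLinearMap) ∘ₗ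
      (LinearEquiv.ofEq _ _ hrange).toLinearMap with hgbardef
  have hgbar : ∀ y : P.complex.X 1,
      gbar ⟨P.complex.d 1 0 y, by rw [hrange]; exact ⟨y, rfl⟩⟩ = g y := by
    intro y
    have h1 : e₁ (Submodule.Quotient.mk y) =
        ⟨P.complex.d 1 0 y, ⟨y, rfl⟩⟩ := by
      apply Subtype.ext
      simp [he₁, LinearMap.quotKerEquivRange_apply_mk]
    have h2 : (LinearEquiv.ofEq _ _ hrange) ⟨P.complex.d 1 0 y, by rw [hrange]; exact ⟨y, rfl⟩⟩
        = ⟨P.complex.d 1 0 y, ⟨y, rfl⟩⟩ := rfl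
    show (Submodule.liftQ _ g.hom hker_le)
      (e₁.symm ((LinearEquiv.ofEq _ _ hrange) ⟨P.complex.d 1 0 y, _⟩)) = g y
    rw [h2, ← h1, LinearEquiv.symm_apply_apply, Submodule.liftQ_apply]
  -- the S-side
  have hinj : Function.Injective (LinearMap.lTensor S ((LinearMap.ker π₀).subtype)) := by
    set σ : (S →₀ R) →ₗ[R] S := Finsupp.linearCombination R (id : S → S) with hσ
    have hσsurj : Function.Surjective σ := fun s => ⟨Finsupp.single s 1, by simp [hσ]⟩
    exact lTensor_injective_of_exact_of_exact_of_rTensor_injective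
      (LinearMap.exact_subtype_ker_map σ) hσsurj
      (LinearMap.exact_subtype_ker_map π₀) hsurj0
      (Module.Flat.rTensor_preserves_injective_linearMap _ (Submodule.injective_subtype _))
      (Module.Flat.lTensor_preserves_injective_linearMap _ (Submodule.injective_subtype _))
  set ι' : TensorProduct R S (LinearMap.ker π₀) →ₗ[S] TensorProduct R S (P.complex.X 0) :=
    ((LinearMap.ker π₀).subtype).baseChange S with hι'
  set π' : TensorProduct R S (P.complex.X 0) →ₗ[S] TensorProduct R S F :=
    π₀.baseChange S with hπ'
  have hcoeι' : ⇑ι' = ⇑(LinearMap.lTensor S (LinearMap.ker π₀).subtype) :=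
    LinearMap.baseChange_eq_ltensor _
  have hcoeπ' : ⇑π' = ⇑(LinearMap.lTensor S π₀) := LinearMap.baseChange_eq_ltensor _
  have hι'inj : Function.Injective ι' := by rw [hcoeι']; exact hinj
  have hπ'surj : Function.Surjective π' := by
    rw [hcoeπ']; exact LinearMap.lTensor_surjective S hsurj0
  have hex' : Function.Exact ι' π' := by
    rw [hcoeι', hcoeπ']
    exact lTensor_exact S (LinearMap.exact_subtype_ker_map π₀) hsurj0
  have hrange' : LinearMap.range ι' = LinearMap.ker π' := (LinearMap.exact_iff.mp hex').symm
  set eK : TensorProduct R S (LinearMap.ker π₀) ≃ₗ[S] LinearMap.ker π' :=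
    (LinearEquiv.ofInjective ι' hι'inj).trans (LinearEquiv.ofEq _ _ hrange') with heK
  set φ' : TensorProduct R S (LinearMap.ker π₀) →ₗ[S] Y := LinearMap.liftBaseChange S gbar
    with hφ'
  set φ'' : LinearMap.ker π' →ₗ[S] Y := φ' ∘ₗ eK.symm.toLinearMap with hφ''
  haveI : Module.Projective R (P.complex.X 0) :=
    (IsProjective.iff_projective _).mpr (P.projective 0)
  haveI : Module.Projective S (TensorProduct R S (P.complex.X 0)) :=
    Module.Projective.tensorProduct
  haveI : Module.Flat S (TensorProduct R S F) := Module.Flat.baseChange R S F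
  have hExtS : Subsingleton (((Ext S (ModuleCat S) 1).obj
      (op (ModuleCat.of S (TensorProduct R S F)))).obj (ModuleCat.of S Y)) :=
    hC (TensorProduct R S F) inferInstance
  letI : Module R ↑(ModuleCat.of S Y) := inferInstanceAs (Module R ↑Y)
  letI : IsScalarTower R S ↑(ModuleCat.of S Y) := inferInstanceAs (IsScalarTower R S ↑Y)
  obtain ⟨Φ, hΦ⟩ := extension_property (A := S) (ModuleCat.of S Y) hExtS π' hπ'surj φ''
  refine ⟨ModuleCat.ofHom ((Φ.restrictScalars R) ∘ₗ ((TensorProduct.mk R S (P.complex.X 0)) 1) :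
    P.complex.X 0 →ₗ[R] Y), ?_⟩
  apply ModuleCat.hom_ext; apply LinearMap.ext
  intro y
  have hmemK : P.complex.d 1 0 y ∈ LinearMap.ker π₀ := by
    rw [LinearMap.mem_ker]; exact hex0.apply_apply_eq_zero y
  set z : TensorProduct R S (LinearMap.ker π₀) :=
    (1 : S) ⊗ₜ[R] (⟨P.complex.d 1 0 y, hmemK⟩ : LinearMap.ker π₀) with hz
  have hz1 : ι' z = (1 : S) ⊗ₜ[R] (P.complex.d 1 0 y) := by
    rw [hι', hz, LinearMap.baseChange_tmul]; rfl
  have hzker : ι' z ∈ LinearMap.ker π' := by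
    rw [LinearMap.mem_ker]; exact hex'.apply_apply_eq_zero z
  have heq : eK z = ⟨ι' z, hzker⟩ := by apply Subtype.ext; rfl
  calc (Φ.restrictScalars R) (((TensorProduct.mk R S (P.complex.X 0)) 1) (P.complex.d 1 0 y))
      = Φ ((1 : S) ⊗ₜ[R] (P.complex.d 1 0 y)) := rfl
  _ = Φ (ι' z) := by rw [hz1]
  _ = φ'' ⟨ι' z, hzker⟩ := hΦ ⟨ι' z, hzker⟩
  _ = φ' (eK.symm ⟨ι' z, hzker⟩) := rfl
  _ = φ' z := by rw [← heq, LinearEquiv.symm_apply_apply]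
  _ = (1 : S) • gbar ⟨P.complex.d 1 0 y, hmemK⟩ := by
    rw [hφ', hz, LinearMap.liftBaseChange_tmul]
  _ = gbar ⟨P.complex.d 1 0 y, hmemK⟩ := one_smul _ _
  _ = g y := hgbar y
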